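/- arXiv:0812.3519 — 8 statements merged into one kernel-verified Lean document; each statement's English description precedes it below -/
import Mathlib

section
/- Let F = y·z·w³ + x·y·z³ + w·x·y³ + z·w·x³ ∈ ℂ[x,y,z,w]. For every nonzero vector (x,y,z,w) ∈ ℂ⁴, all four partial derivatives ∂F/∂x, ∂F/∂y, ∂F/∂z, ∂F/∂w vanish at (x,y,z,w) if and only if at least three of the coordinates x,y,z,w are zero. Consequently, the singular locus of the quintic surface Y = {F = 0} ⊂ ℙ³(ℂ) consists exactly of the four coordinate points [1:0:0:0], [0:1:0:0], [0:0:1:0], [0:0:0:1]. -/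
open MvPolynomial

/-- The homogeneous quintic `F = y·z·w³ + x·y·z³ + w·x·y³ + z·w·x³` in
variables `x = X 0`, `y = X 1`, `z = X 2`, `w = X 3` over `ℂ`. -/
noncomputable def quinticF : MvPolynomial (Fin 4) ℂ :=
  X 1 * X 2 * X 3 ^ 3 + X 0 * X 1 * X 2 ^ 3 + X 3 * X 0 * X 1 ^ 3 + X 2 * X 3 * X 0 ^ 3

private lemma key (a b c d : ℂ)
    (h1 : b * c ^ 3 + d * b ^ 3 + 3 * c * d * a ^ 2 = 0)
    (h2 : c * d ^ 3 + a * c ^ 3 + 3 * d * a * b ^ 2 = 0)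
    (h3 : b * d ^ 3 + 3 * a * b * c ^ 2 + d * a ^ 3 = 0)
    (h4 : 3 * b * c * d ^ 2 + a * b ^ 3 + c * a ^ 3 = 0) :
    (b = 0 ∧ c = 0 ∧ d = 0) ∨ (a = 0 ∧ c = 0 ∧ d = 0) ∨
    (a = 0 ∧ b = 0 ∧ d = 0) ∨ (a = 0 ∧ b = 0 ∧ c = 0) := by
  have h3ne : (3 : ℕ) ≠ 0 := by norm_num
  have habcd : a * b * c * d = 0 := by
    by_contra h
    have hcube : (a * b * c * d) ^ 3 = 0 := by
      linear_combination (1/3*a^2*c*d^5 + 3/5*a^3*b^2*d^3) * h1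
        + (5/3*a*b*c*d^5 + 2/5*a^2*b^3*d^3) * h2
        + (-2/3*a*c^2*d^5) * h3
        + (-1/3*a*c*d^6 - 9/5*a^2*b^2*d^4) * h4
    exact h (pow_eq_zero_iff h3ne |>.mp hcube)
  by_cases ha : a = 0
  · subst ha
    have hcd : c = 0 ∨ d = 0 := by
      have h : c * d ^ 3 = 0 := by linear_combination h2
      rcases mul_eq_zero.mp h with h | h
      · exact Or.inl h
      · exact Or.inr (pow_eq_zero_iff h3ne |>.mp h)
    rcases hcd with hc | hd
    · subst hc
      have h : b * d ^ 3 = 0 := by linear_combination h3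
      rcases mul_eq_zero.mp h with h | h
      · exact Or.inr (Or.inr (Or.inr ⟨rfl, h, rfl⟩))
      · exact Or.inr (Or.inl ⟨rfl, rfl, pow_eq_zero_iff h3ne |>.mp h⟩)
    · subst hd
      have h : b * c ^ 3 = 0 := by linear_combination h1
      rcases mul_eq_zero.mp h with h | h
      · exact Or.inr (Or.inr (Or.inl ⟨rfl, h, rfl⟩))
      · exact Or.inr (Or.inl ⟨rfl, pow_eq_zero_iff h3ne |>.mp h, rfl⟩)
  · by_cases hb : b = 0
    · subst hb
      have hcd : c = 0 ∨ d = 0 := by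
        have h : c * d * a ^ 2 = 0 := by linear_combination (1/3 : ℂ) * h1
        rcases mul_eq_zero.mp h with h | h
        · exact mul_eq_zero.mp h
        · exact absurd (pow_eq_zero_iff two_ne_zero |>.mp h) ha
      rcases hcd with hc | hd
      · subst hc
        have h : d * a ^ 3 = 0 := by linear_combination h3
        rcases mul_eq_zero.mp h with h | h
        · exact Or.inl ⟨rfl, rfl, h⟩
        · exact absurd (pow_eq_zero_iff h3ne |>.mp h) ha
      · subst hd
        have h : a * c ^ 3 = 0 := by linear_combination h2
        rcases mul_eq_zero.mp h with h | h
        · exact absurd h ha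
        · exact Or.inl ⟨rfl, pow_eq_zero_iff h3ne |>.mp h, rfl⟩
    · -- a ≠ 0, b ≠ 0 : impossible
      exfalso
      have hcd : c = 0 ∨ d = 0 := by
        rcases mul_eq_zero.mp habcd with h | h
        · rcases mul_eq_zero.mp h with h | h
          · rcases mul_eq_zero.mp h with h | h
            exacts [absurd h ha, absurd h hb]
          · exact Or.inl h
        · exact Or.inr h
      have hd : d = 0 := by
        rcases hcd with hc | hd
        · subst hc
          have h : d * b ^ 3 = 0 := by linear_combination h1
          rcases mul_eq_zero.mp h with h | h
          · exact h
          · exact absurd (pow_eq_zero_iff h3ne |>.mp h) hb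
        · exact hd
      subst hd
      have hc : c = 0 := by
        have h : b * c ^ 3 = 0 := by linear_combination h1
        rcases mul_eq_zero.mp h with h | h
        · exact absurd h hb
        · exact pow_eq_zero_iff h3ne |>.mp h
      subst hc
      have h : a * b ^ 3 = 0 := by linear_combination h4
      rcases mul_eq_zero.mp h with h | h
      · exact ha h
      · exact hb (pow_eq_zero_iff h3ne |>.mp h)

private lemma eval_pderiv (v : Fin 4 → ℂ) :
    eval v (pderiv 0 quinticF)
        = v 1 * (v 2) ^ 3 + v 3 * (v 1) ^ 3 + 3 * v 2 * v 3 * (v 0) ^ 2 ∧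
    eval v (pderiv 1 quinticF)
        = v 2 * (v 3) ^ 3 + v 0 * (v 2) ^ 3 + 3 * v 3 * v 0 * (v 1) ^ 2 ∧
    eval v (pderiv 2 quinticF)
        = v 1 * (v 3) ^ 3 + 3 * v 0 * v 1 * (v 2) ^ 2 + v 3 * (v 0) ^ 3 ∧
    eval v (pderiv 3 quinticF)
        = 3 * v 1 * v 2 * (v 3) ^ 2 + v 0 * (v 1) ^ 3 + v 2 * (v 0) ^ 3 := by
  refine ⟨?_, ?_, ?_, ?_⟩ <;>
    · simp [quinticF, pderiv_mul, pderiv_pow, pderiv_X]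
      ring

private lemma fin4_cases : ∀ i : Fin 4, i = 0 ∨ i = 1 ∨ i = 2 ∨ i = 3 := by decide

private lemma part1 (v : Fin 4 → ℂ) (hv : v ≠ 0) :
    (∀ i : Fin 4, eval v (pderiv i quinticF) = 0) ↔
      ∃ j : Fin 4, ∀ i : Fin 4, i ≠ j → v i = 0 := by
  obtain ⟨e0, e1, e2, e3⟩ := eval_pderiv v
  constructor
  · intro h
    have h0 := h 0; have h1 := h 1; have h2 := h 2; have h3 := h 3
    rw [e0] at h0; rw [e1] at h1; rw [e2] at h2; rw [e3] at h3
    rcases key (v 0) (v 1) (v 2) (v 3) h0 h1 h2 h3 with h | h | h | h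
    · exact ⟨0, fun i hi => by rcases fin4_cases i with rfl | rfl | rfl | rfl <;> simp_all⟩
    · exact ⟨1, fun i hi => by rcases fin4_cases i with rfl | rfl | rfl | rfl <;> simp_all⟩
    · exact ⟨2, fun i hi => by rcases fin4_cases i with rfl | rfl | rfl | rfl <;> simp_all⟩
    · exact ⟨3, fun i hi => by rcases fin4_cases i with rfl | rfl | rfl | rfl <;> simp_all⟩
  · rintro ⟨j, hj⟩ i
    rcases fin4_cases j with rfl | rfl | rfl | rfl
    · have hb := hj 1 (by decide); have hc := hj 2 (by decide); have hd := hj 3 (by decide)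
      rcases fin4_cases i with rfl | rfl | rfl | rfl
      · rw [e0, hb, hc, hd]; ring
      · rw [e1, hb, hc, hd]; ring
      · rw [e2, hb, hc, hd]; ring
      · rw [e3, hb, hc, hd]; ring
    · have ha := hj 0 (by decide); have hc := hj 2 (by decide); have hd := hj 3 (by decide)
      rcases fin4_cases i with rfl | rfl | rfl | rfl
      · rw [e0, ha, hc, hd]; ring
      · rw [e1, ha, hc, hd]; ring
      · rw [e2, ha, hc, hd]; ring
      · rw [e3, ha, hc, hd]; ring
    · have ha := hj 0 (by decide); have hb := hj 1 (by decide); have hd := hj 3 (by decide)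
      rcases fin4_cases i with rfl | rfl | rfl | rfl
      · rw [e0, ha, hb, hd]; ring
      · rw [e1, ha, hb, hd]; ring
      · rw [e2, ha, hb, hd]; ring
      · rw [e3, ha, hb, hd]; ring
    · have ha := hj 0 (by decide); have hb := hj 1 (by decide); have hc := hj 2 (by decide)
      rcases fin4_cases i with rfl | rfl | rfl | rfl
      · rw [e0, ha, hb, hc]; ring
      · rw [e1, ha, hb, hc]; ring
      · rw [e2, ha, hb, hc]; ring
      · rw [e3, ha, hb, hc]; ring

/-- For every nonzero `v ∈ ℂ⁴`, all four partial derivatives of `F` vanish at `v`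
if and only if at least three of the coordinates of `v` are zero.  Consequently,
the singular locus of `Y = {F = 0} ⊂ ℙ³(ℂ)` consists exactly of the four
coordinate points `[1:0:0:0], [0:1:0:0], [0:0:1:0], [0:0:0:1]`. -/
theorem quinticF_singular_locus :
    (∀ v : Fin 4 → ℂ, v ≠ 0 →
      ((∀ i : Fin 4, eval v (pderiv i quinticF) = 0) ↔
        ∃ j : Fin 4, ∀ i : Fin 4, i ≠ j → v i = 0)) ∧
    {p : Projectivization ℂ (Fin 4 → ℂ) |
        ∀ i : Fin 4, eval p.rep (pderiv i quinticF) = 0} =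
      {Projectivization.mk ℂ ![1, 0, 0, 0] (by intro h; simpa using congrFun h 0),
       Projectivization.mk ℂ ![0, 1, 0, 0] (by intro h; simpa using congrFun h 1),
       Projectivization.mk ℂ ![0, 0, 1, 0] (by intro h; simpa using congrFun h 2),
       Projectivization.mk ℂ ![0, 0, 0, 1] (by intro h; simpa using congrFun h 3)} := by
  refine ⟨part1, ?_⟩
  ext p
  simp only [Set.mem_setOf_eq, Set.mem_insert_iff, Set.mem_singleton_iff]
  constructor
  · intro hp
    have hrep := p.rep_nonzero
    rcases (part1 p.rep hrep).mp hp with ⟨j, hj⟩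
    have hjne : p.rep j ≠ 0 := by
      intro h
      apply hrep
      funext i
      by_cases hi : i = j
      · rw [hi]; exact h
      · exact hj i hi
    rcases fin4_cases j with rfl | rfl | rfl | rfl
    · left
      rw [← p.mk_rep]
      rw [Projectivization.mk_eq_mk_iff]
      refine ⟨Units.mk0 (p.rep 0) hjne, ?_⟩
      funext i
      rcases fin4_cases i with rfl | rfl | rfl | rfl <;>
        simp_all [hj 1 (by decide), hj 2 (by decide), hj 3 (by decide)]
    · right; left
      rw [← p.mk_rep]
      rw [Projectivization.mk_eq_mk_iff]
      refine ⟨Units.mk0 (p.rep 1) hjne, ?_⟩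
      funext i
      rcases fin4_cases i with rfl | rfl | rfl | rfl <;>
        simp_all [hj 0 (by decide), hj 2 (by decide), hj 3 (by decide)]
    · right; right; left
      rw [← p.mk_rep]
      rw [Projectivization.mk_eq_mk_iff]
      refine ⟨Units.mk0 (p.rep 2) hjne, ?_⟩
      funext i
      rcases fin4_cases i with rfl | rfl | rfl | rfl <;>
        simp_all [hj 0 (by decide), hj 1 (by decide), hj 3 (by decide)]
    · right; right; right
      rw [← p.mk_rep]
      rw [Projectivization.mk_eq_mk_iff]
      refine ⟨Units.mk0 (p.rep 3) hjne, ?_⟩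
      funext i
      rcases fin4_cases i with rfl | rfl | rfl | rfl <;>
        simp_all [hj 0 (by decide), hj 1 (by decide), hj 2 (by decide)]
  · intro hp
    have main : ∀ (w : Fin 4 → ℂ) (hw : w ≠ 0) (j : Fin 4),
        (∀ i : Fin 4, i ≠ j → w i = 0) →
        p = Projectivization.mk ℂ w hw →
        ∀ i : Fin 4, eval p.rep (pderiv i quinticF) = 0 := by
      intro w hw j hwj hpw
      apply (part1 p.rep p.rep_nonzero).mpr
      obtain ⟨a, ha⟩ := Projectivization.exists_smul_eq_mk_rep ℂ w hw
      refine ⟨j, fun i hi => ?_⟩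
      rw [hpw, ← ha]
      simp [hwj i hi]
    rcases hp with h | h | h | h
    · exact main ![1, 0, 0, 0] _ 0
        (fun i hi => by
          rcases fin4_cases i with rfl | rfl | rfl | rfl <;>
            first | exact absurd rfl hi | rfl) h
    · exact main ![0, 1, 0, 0] _ 1
        (fun i hi => by
          rcases fin4_cases i with rfl | rfl | rfl | rfl <;>
            first | exact absurd rfl hi | rfl) h
    · exact main ![0, 0, 1, 0] _ 2
        (fun i hi => by
          rcases fin4_cases i with rfl | rfl | rfl | rfl <;>
            first | exact absurd rfl hi | rfl) h
    · exact main ![0, 0, 0, 1] _ 3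
        (fun i hi => by
          rcases fin4_cases i with rfl | rfl | rfl | rfl <;>
            first | exact absurd rfl hi | rfl) h
end

section
/- The polynomial F = y·z·w³ + x·y·z³ + w·x·y³ + z·w·x³ is irreducible in the polynomial ring ℂ[x,y,z,w] (as a multivariate polynomial over ℂ). -/
/-!
Viewed as a cubic in `x` over `ℂ[y,z,w]`, `F = zw·x³ + (yz³ + wy³)·x + yzw³`. This is Eisenstein
at the prime `y`, and it is primitive because the primes `z` and `w` do not divide `yz³ + wy³`,
so `zw` and `yz³ + wy³` are coprime.
-/

open MvPolynomial

theorem not_dvd_of_map_eq_zero {F R S : Type*} [Semigroup R] [SemigroupWithZero S] [FunLike F R S]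
    [MulHomClass F R S] (f : F) {p q : R} (hq : f q = 0) (hp : f p ≠ 0) : ¬ q ∣ p :=
  fun hqp => hp (zero_dvd_iff.mp (hq ▸ map_dvd f hqp))

namespace Polynomial

variable {R : Type*} [CommRing R] [IsDomain R]

theorem irreducible_C_mul_X_pow_add_C_mul_X_add_C {p a b c : R} {n : ℕ} (hn : 2 ≤ n)
    (hp : Prime p) (hpb : p ∣ b) (hpc : p ∣ c) (hpc2 : ¬ p ^ 2 ∣ c) (hab : IsRelPrime a b) :
    Irreducible (C a * X ^ n + C b * X + C c) := by
  have hpa : ¬ p ∣ a := fun hpa => hp.not_isUnit (hab hpa hpb)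
  have ha : a ≠ 0 := fun ha => hpa (ha ▸ dvd_zero p)
  have hn0 : n ≠ 0 := by omega
  have hn1 : n ≠ 1 := by omega
  have hcoeff (k : ℕ) : (C a * X ^ n + C b * X + C c).coeff k =
      (if k = n then a else 0) + (if k = 1 then b else 0) + (if k = 0 then c else 0) := by
    simp only [coeff_add, coeff_C_mul_X_pow, coeff_C_mul_X, coeff_C]
  have hdeg : (C a * X ^ n + C b * X + C c).natDegree = n := by
    apply natDegree_eq_of_le_of_coeff_ne_zero
    · rw [natDegree_le_iff_coeff_eq_zero]
      intro k hk
      have hk : n < k := by exact_mod_cast hk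
      simp [hcoeff, show k ≠ n by omega, show k ≠ 1 by omega, show k ≠ 0 by omega]
    · simpa [hcoeff, hn0, hn1] using ha
  have hP := (Ideal.span_singleton_prime hp.ne_zero).mpr hp
  refine IsEisensteinAt.irreducible ⟨?_, ?_, ?_⟩ hP ?_ (by omega)
  · rw [leadingCoeff, hdeg, hcoeff, Ideal.mem_span_singleton]
    simpa [hn0, hn1] using hpa
  · intro k hk
    rw [hdeg] at hk
    rw [hcoeff, if_neg hk.ne, Ideal.mem_span_singleton]
    split_ifs <;> simp [hpb, hpc, dvd_add]
  · rw [hcoeff, Ideal.span_singleton_pow, Ideal.mem_span_singleton]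
    simpa [hn0.symm] using hpc2
  · intro r hr
    rw [C_dvd_iff_dvd_coeff] at hr
    exact hab (by simpa [hcoeff, hn0, hn1] using hr n) (by simpa [hcoeff, hn1.symm] using hr 1)

end Polynomial

theorem finSuccEquiv_quinticF : finSuccEquiv ℂ 3 quinticF =
    .C (X 1 * X 2) * .X ^ 3 + .C (X 0 * X 1 ^ 3 + X 2 * X 0 ^ 3) * .X
      + .C (X 0 * X 1 * X 2 ^ 3) := by
  rw [quinticF, show (1 : Fin 4) = Fin.succ 0 from rfl, show (2 : Fin 4) = Fin.succ 1 from rfl,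
    show (3 : Fin 4) = Fin.succ 2 from rfl]
  simp only [map_add, map_mul, map_pow, finSuccEquiv_X_zero, finSuccEquiv_X_succ]
  ring

/-- The polynomial `F = y·z·w³ + x·y·z³ + w·x·y³ + z·w·x³` is irreducible
in `ℂ[x,y,z,w]`. -/
theorem quinticF_irreducible : Irreducible quinticF := by
  rw [← MulEquiv.irreducible_iff (finSuccEquiv ℂ 3), finSuccEquiv_quinticF]
  refine Polynomial.irreducible_C_mul_X_pow_add_C_mul_X_add_C (by norm_num) (p := X 0)
    X_prime ⟨X 1 ^ 3 + X 2 * X 0 ^ 2, by ring⟩ ⟨X 1 * X 2 ^ 3, by ring⟩ ?_ ?_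
  · rw [sq, mul_assoc, mul_dvd_mul_iff_left (X_ne_zero 0)]
    exact not_dvd_of_map_eq_zero (eval ![0, 1, 1]) (by simp) (by simp)
  · refine .mul_left (X_prime.irreducible.isRelPrime_iff_not_dvd.mpr ?_)
      (X_prime.irreducible.isRelPrime_iff_not_dvd.mpr ?_)
    · exact not_dvd_of_map_eq_zero (eval ![1, 0, 1]) (by simp) (by simp)
    · exact not_dvd_of_map_eq_zero (eval ![1, 1, 0]) (by simp) (by simp)
end

section
/- Let F = y·z·w³ + x·y·z³ + w·x·y³ + z·w·x³ ∈ ℂ[x,y,z,w]. For every α ∈ ℂ with α⁵ = −1 and all z, w ∈ ℂ, one has F(α·z, α⁷·w, z, w) = 0. In other words, each of the five lines ℓ_α = {x = α·z, y = α⁷·w} ⊂ ℙ³ with α⁵ = −1 is contained in the quintic surface Y = {F = 0}. -/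
open MvPolynomial

/-- For every `α ∈ ℂ` with `α⁵ = -1` and all `z, w ∈ ℂ`, one has
`F(α·z, α⁷·w, z, w) = 0`, i.e. each of the five lines
`ℓ_α = {x = α·z, y = α⁷·w}` lies on the quintic `Y = {F = 0}`. -/
theorem lines_ell_alpha_on_quintic (α : ℂ) (hα : α ^ 5 = -1) (z w : ℂ) :
    eval ![α * z, α ^ 7 * w, z, w] quinticF = 0 := by
  simp only [quinticF, eval_add, eval_mul, eval_pow, eval_X]
  simp only [Matrix.cons_val_zero, Matrix.cons_val_one, Matrix.head_cons,
    Matrix.cons_val_two, Matrix.cons_val_three, Matrix.tail_cons]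
  linear_combination (α ^ 7 * (α ^ 10 - α ^ 5 + 1) * z * w ^ 4 + α ^ 3 * z ^ 4 * w) * hα
end

section
/- Let F = y·z·w³ + x·y·z³ + w·x·y³ + z·w·x³ ∈ ℂ[x,y,z,w]. For every ρ ∈ ℂ with ρ³ = 1 and all λ, μ ∈ ℂ, one has F(ρ·μ³, −λ·μ², ρ·λ³, −μ·λ²) = 0. In other words, each rational curve C_ρ = {[ρμ³ : −λμ² : ρλ³ : −μλ²] : [λ:μ] ∈ ℙ¹} with ρ³ = 1 is contained in the quintic surface Y = {F = 0}. -/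
open MvPolynomial

/-- For every `ρ ∈ ℂ` with `ρ³ = 1` and all `λ, μ ∈ ℂ`, one has
`F(ρ·μ³, −λ·μ², ρ·λ³, −μ·λ²) = 0`, i.e. each rational curve
`C_ρ = {[ρμ³ : −λμ² : ρλ³ : −μλ²]}` lies on the quintic `Y = {F = 0}`. -/
theorem curves_C_rho_on_quintic (ρ : ℂ) (hρ : ρ ^ 3 = 1) (lam μ : ℂ) :
    eval ![ρ * μ ^ 3, -lam * μ ^ 2, ρ * lam ^ 3, -μ * lam ^ 2] quinticF = 0 := by
  simp only [quinticF, map_add, map_mul, map_pow, eval_X]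
  simp [Matrix.cons_val_zero, Matrix.cons_val_one, Matrix.head_cons]
  linear_combination (-ρ * (lam ^ 10 * μ ^ 5 + lam ^ 5 * μ ^ 10)) * hρ
end

section
/- Let F = y·z·w³ + x·y·z³ + w·x·y³ + z·w·x³ ∈ ℂ[x,y,z,w]. For every ρ ∈ ℂ with ρ³ = 1 and all λ, μ ∈ ℂ, one has F(−λ·μ², ρ·λ³, −μ·λ², ρ·μ³) = 0. In other words, each rational curve D_ρ = {[−λμ² : ρλ³ : −μλ² : ρμ³] : [λ:μ] ∈ ℙ¹} with ρ³ = 1 is contained in the quintic surface Y = {F = 0}. -/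
open MvPolynomial

/-- For every `ρ ∈ ℂ` with `ρ³ = 1` and all `λ, μ ∈ ℂ`, one has
`F(−λ·μ², ρ·λ³, −μ·λ², ρ·μ³) = 0`, i.e. each rational curve
`D_ρ = {[−λμ² : ρλ³ : −μλ² : ρμ³]}` lies on the quintic `Y = {F = 0}`. -/
theorem curves_D_rho_on_quintic (ρ : ℂ) (hρ : ρ ^ 3 = 1) (lam μ : ℂ) :
    eval ![-lam * μ ^ 2, ρ * lam ^ 3, -μ * lam ^ 2, ρ * μ ^ 3] quinticF = 0 := by
  simp only [quinticF, eval_add, eval_mul, eval_pow, eval_X]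
  simp only [Matrix.cons_val_zero, Matrix.cons_val_one, Matrix.head_cons,
    Matrix.cons_val_two, Matrix.cons_val_three, Matrix.tail_cons]
  linear_combination (-ρ * (lam ^ 5 * μ ^ 10 + lam ^ 10 * μ ^ 5)) * hρ
end

section
/- Let F = y·z·w³ + x·y·z³ + w·x·y³ + z·w·x³ ∈ ℂ[x,y,z,w]. As an identity of polynomials in ℂ[s,t,u,v]: F(t·u³·v⁷, s·t³·u⁷, v·s³·t⁷, u·v³·s⁷) = (s·t·u·v)¹⁰ · (s¹⁵ + t¹⁵ + u¹⁵ + v¹⁵). In particular, the rational map φ: [s:t:u:v] ↦ [t u³ v⁷ : s t³ u⁷ : v s³ t⁷ : u v³ s⁷] maps the Fermat surface S₁₅ = {s¹⁵+t¹⁵+u¹⁵+v¹⁵ = 0} ⊂ ℙ³ into the quintic surface Y = {F = 0}: whenever s¹⁵+t¹⁵+u¹⁵+v¹⁵ = 0 for (s,t,u,v) ∈ ℂ⁴, one has F(t u³ v⁷, s t³ u⁷, v s³ t⁷, u v³ s⁷) = 0. -/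
open MvPolynomial

/-- As polynomials in `ℂ[s,t,u,v]` (with `s = X 0`, `t = X 1`, `u = X 2`, `v = X 3`):
`F(t u³ v⁷, s t³ u⁷, v s³ t⁷, u v³ s⁷) = (s t u v)¹⁰ · (s¹⁵ + t¹⁵ + u¹⁵ + v¹⁵)`.
In particular, the map `φ: [s:t:u:v] ↦ [t u³ v⁷ : s t³ u⁷ : v s³ t⁷ : u v³ s⁷]`
maps the Fermat surface `S₁₅` into the quintic `Y = {F = 0}`. -/
theorem fermat_cover_identity :
    (aeval ![(X 1 * X 2 ^ 3 * X 3 ^ 7 : MvPolynomial (Fin 4) ℂ),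
             X 0 * X 1 ^ 3 * X 2 ^ 7,
             X 3 * X 0 ^ 3 * X 1 ^ 7,
             X 2 * X 3 ^ 3 * X 0 ^ 7] quinticF
        = (X 0 * X 1 * X 2 * X 3) ^ 10 * (X 0 ^ 15 + X 1 ^ 15 + X 2 ^ 15 + X 3 ^ 15)) ∧
    ∀ s t u v : ℂ, s ^ 15 + t ^ 15 + u ^ 15 + v ^ 15 = 0 →
      eval ![t * u ^ 3 * v ^ 7, s * t ^ 3 * u ^ 7, v * s ^ 3 * t ^ 7, u * v ^ 3 * s ^ 7]
        quinticF = 0 := by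
  constructor
  · simp only [quinticF, map_add, map_mul, map_pow, aeval_X, Matrix.cons_val_zero,
      Matrix.cons_val_one, Matrix.head_cons, Matrix.cons_val_two, Matrix.tail_cons,
      Matrix.cons_val_three]
    ring
  · intro s t u v h
    simp only [quinticF, map_add, map_mul, map_pow, eval_X, Matrix.cons_val_zero,
      Matrix.cons_val_one, Matrix.head_cons, Matrix.cons_val_two, Matrix.tail_cons,
      Matrix.cons_val_three]
    linear_combination (s*t*u*v)^10 * h
end

section
/- Define C = {(c₁,c₂,c₃) ∈ (ℤ/15ℤ)³ : c₁+3c₂+7c₃ = 3c₁+7c₂ = 7c₁+c₃ = c₂+3c₃}. Then the set of quadruples (a₀,a₁,a₂,a₃) ∈ (ℤ/15ℤ)⁴ satisfying a₀+a₁+a₂+a₃ = 0 and a₁c₁+a₂c₂+a₃c₃ = 0 for all (c₁,c₂,c₃) ∈ C is exactly the set {b·(4,8,1,2) : b ∈ ℤ/15ℤ} of scalar multiples of (4,8,1,2); in particular it has exactly 15 elements. -/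
/-- The additive incarnation of the covering group `G` of the dominant map
`φ: S₁₅ ⇢ Y` from the degree-15 Fermat surface to the quintic
`yzw³ + xyz³ + wxy³ + zwx³ = 0`. -/
def coverGroupC : Set (Fin 3 → ZMod 15) :=
  {c | c 0 + 3 * c 1 + 7 * c 2 = 3 * c 0 + 7 * c 1 ∧
       3 * c 0 + 7 * c 1 = 7 * c 0 + c 2 ∧
       7 * c 0 + c 2 = c 1 + 3 * c 2}

lemma g1_mem : (![1, 0, 11] : Fin 3 → ZMod 15) ∈ coverGroupC := by
  constructor
  · decide
  constructor <;> decide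

lemma g2_mem : (![0, 1, 7] : Fin 3 → ZMod 15) ∈ coverGroupC := by
  constructor
  · decide
  constructor <;> decide

lemma set_eq :
    {a : Fin 4 → ZMod 15 | a 0 + a 1 + a 2 + a 3 = 0 ∧
        ∀ c ∈ coverGroupC, a 1 * c 0 + a 2 * c 1 + a 3 * c 2 = 0}
      = {a | ∃ b : ZMod 15, a = b • ![4, 8, 1, 2]} := by
  ext a
  simp only [Set.mem_setOf_eq]
  constructor
  · rintro ⟨hsum, h⟩
    have h1 := h _ g1_mem
    have h2 := h _ g2_mem
    simp only [Matrix.cons_val_zero, Matrix.cons_val_one, Matrix.head_cons,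
      Matrix.cons_val_two, Matrix.tail_cons] at h1 h2
    refine ⟨8 * a 3, ?_⟩
    have h15 : (15 : ZMod 15) = 0 := by decide
    funext i
    fin_cases i
    · show a 0 = 8 * a 3 * 4
      linear_combination hsum - h1 - h2 - a 3 * h15
    · show a 1 = 8 * a 3 * 8
      linear_combination h1 - 5 * a 3 * h15
    · show a 2 = 8 * a 3 * 1
      linear_combination h2 - a 3 * h15
    · show a 3 = 8 * a 3 * 2
      linear_combination - a 3 * h15
  · rintro ⟨b, rfl⟩
    have h15 : (15 : ZMod 15) = 0 := by decide
    constructor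
    · show b * 4 + b * 8 + b * 1 + b * 2 = 0
      linear_combination b * h15
    · intro c hc
      obtain ⟨_, _, h3⟩ := hc
      show b * 8 * c 0 + b * 1 * c 1 + b * 2 * c 2 = 0
      linear_combination -b * h3 + b * c 0 * h15

/-- The quadruples `(a₀,a₁,a₂,a₃) ∈ (ℤ/15ℤ)⁴` with `a₀+a₁+a₂+a₃ = 0` and
`a₁c₁ + a₂c₂ + a₃c₃ = 0` for all `(c₁,c₂,c₃) ∈ C` are exactly the scalar
multiples of `(4,8,1,2)`; in particular there are exactly 15 of them. -/
theorem G_invariant_characters :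
    ({a : Fin 4 → ZMod 15 | a 0 + a 1 + a 2 + a 3 = 0 ∧
        ∀ c ∈ coverGroupC, a 1 * c 0 + a 2 * c 1 + a 3 * c 2 = 0}
      = {a | ∃ b : ZMod 15, a = b • ![4, 8, 1, 2]}) ∧
    ({a : Fin 4 → ZMod 15 | a 0 + a 1 + a 2 + a 3 = 0 ∧
        ∀ c ∈ coverGroupC, a 1 * c 0 + a 2 * c 1 + a 3 * c 2 = 0}).ncard = 15 := by
  refine ⟨set_eq, ?_⟩
  rw [set_eq]
  have hinj : Function.Injective (fun b : ZMod 15 => b • ![4, 8, 1, 2] : ZMod 15 → (Fin 4 → ZMod 15)) := by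
    intro b b' h
    have := congrFun h 2
    simpa using this
  have : {a : Fin 4 → ZMod 15 | ∃ b : ZMod 15, a = b • ![4, 8, 1, 2]}
      = (fun b : ZMod 15 => b • ![4, 8, 1, 2]) '' Set.univ := by
    ext a; simp [eq_comm]
  rw [this, Set.ncard_image_of_injective _ hinj, Set.ncard_univ,
    Nat.card_eq_fintype_card, ZMod.card]
end

section
/- Let 𝔄₁₅ = {(a₀,a₁,a₂,a₃) ∈ (ℤ/15ℤ)⁴ : each aᵢ ≠ 0 and a₀+a₁+a₂+a₃ = 0}. For α ∈ 𝔄₁₅, let bᵢ ∈ {1,…,14} be the representative of aᵢ, and say α ∈ 𝔗₁₅ if b₀+b₁+b₂+b₃ equals 15 or 45. Define C = {(c₁,c₂,c₃) ∈ (ℤ/15ℤ)³ : c₁+3c₂+7c₃ = 3c₁+7c₂ = 7c₁+c₃ = c₂+3c₃}, and call α G-invariant if a₁c₁+a₂c₂+a₃c₃ = 0 for all (c₁,c₂,c₃) ∈ C. Then the set 𝔊𝔗₁₅^G := {α ∈ 𝔄₁₅ : α is G-invariant and k·α ∈ 𝔗₁₅ for some unit k of ℤ/15ℤ} is exactly the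 orbit {k·(1,2,4,8) : k ∈ (ℤ/15ℤ)ˣ}, and it has exactly 8 elements. -/
/-!
Every `c ∈ C` is determined by `(c₁, c₂)` via `c₃ = 11 c₁ + 7 c₂`, so `G`-invariance of `α` says
`a₁ = 4 a₃` and `a₂ = 8 a₃`; together with `Σ aᵢ = 0` this forces `α = t · (1, 2, 4, 8)` with
`t = a₀`. The sum of representatives of `w · (1, 2, 4, 8)` is `15` or `45` exactly when `w` is a
unit (it is `30` for nonzero non-units), so `t` must be a unit, and the orbit map `k ↦ k · (1, 2, 4, 8)`
is injective, giving `φ(15) = 8` elements.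
-/

namespace Fermat15

/-- Membership in `𝔗₁₅`: the representatives in `{0, …, 14}` sum to `15` or `45`. -/
def IsT15 (a : Fin 4 → ZMod 15) : Prop :=
  (a 0).val + (a 1).val + (a 2).val + (a 3).val = 15 ∨
    (a 0).val + (a 1).val + (a 2).val + (a 3).val = 45

lemma isT15_smul_iff (w : ZMod 15) : IsT15 (w • ![1, 2, 4, 8]) ↔ IsUnit w := by
  unfold IsT15
  revert w
  decide

lemma exists_unit_smul_isT15_smul_iff (t : ZMod 15) :
    (∃ k : (ZMod 15)ˣ, IsT15 ((k : ZMod 15) • t • ![1, 2, 4, 8])) ↔ IsUnit t := by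
  simp only [smul_smul, isT15_smul_iff]
  constructor
  · rintro ⟨k, hk⟩
    exact isUnit_of_mul_isUnit_right hk
  · rintro ⟨u, rfl⟩
    exact ⟨u⁻¹, by simp⟩

lemma smul_ne_zero_of_isUnit {t : ZMod 15} (ht : IsUnit t) (i : Fin 4) :
    (t • ![(1 : ZMod 15), 2, 4, 8]) i ≠ 0 := by
  have : Fact (1 < 15) := ⟨by norm_num⟩
  have hv : IsUnit (![(1 : ZMod 15), 2, 4, 8] i) := by fin_cases i <;> decide
  exact (ht.mul hv).ne_zero

lemma mem_coverGroupC_iff {c : Fin 3 → ZMod 15} :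
    c ∈ coverGroupC ↔ c 2 = 11 * c 0 + 7 * c 1 := by
  have h15 : (15 : ZMod 15) = 0 := rfl
  constructor
  · rintro ⟨-, h, -⟩
    linear_combination -h - c 0 * h15
  · intro h
    refine ⟨?_, ?_, ?_⟩
    · linear_combination 7 * h + (5 * c 0 + 3 * c 1) * h15
    · linear_combination -h - c 0 * h15
    · linear_combination -2 * h - (c 0 + c 1) * h15

lemma forall_coverGroupC_iff {a : Fin 4 → ZMod 15} :
    (∀ c ∈ coverGroupC, a 1 * c 0 + a 2 * c 1 + a 3 * c 2 = 0) ↔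
      a 1 = 4 * a 3 ∧ a 2 = 8 * a 3 := by
  have h15 : (15 : ZMod 15) = 0 := rfl
  simp only [mem_coverGroupC_iff]
  constructor
  · intro h
    have h₁ : a 1 * 1 + a 2 * 0 + a 3 * 11 = 0 := h ![1, 0, 11] rfl
    have h₂ : a 1 * 0 + a 2 * 1 + a 3 * 7 = 0 := h ![0, 1, 7] rfl
    exact ⟨by linear_combination h₁ - a 3 * h15, by linear_combination h₂ - a 3 * h15⟩
  · rintro ⟨h₁, h₂⟩ c hc
    rw [h₁, h₂, hc]
    linear_combination (c 0 + c 1) * a 3 * h15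

lemma sum_eq_zero_and_forall_coverGroupC_iff {a : Fin 4 → ZMod 15} :
    (a 0 + a 1 + a 2 + a 3 = 0 ∧
        ∀ c ∈ coverGroupC, a 1 * c 0 + a 2 * c 1 + a 3 * c 2 = 0) ↔
      ∃ t : ZMod 15, a = t • ![1, 2, 4, 8] := by
  have h15 : (15 : ZMod 15) = 0 := rfl
  rw [forall_coverGroupC_iff]
  constructor
  · rintro ⟨hsum, h₁, h₂⟩
    have h₀ : a 0 = 2 * a 3 := by linear_combination hsum - h₁ - h₂ - a 3 * h15
    refine ⟨a 0, funext fun i => ?_⟩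
    fin_cases i
    · exact (mul_one _).symm
    · show a 1 = a 0 * 2
      linear_combination h₁ - 2 * h₀
    · show a 2 = a 0 * 4
      linear_combination h₂ - 4 * h₀
    · show a 3 = a 0 * 8
      linear_combination -8 * h₀ - a 3 * h15
  · rintro ⟨t, rfl⟩
    simp only [Pi.smul_apply, smul_eq_mul, Matrix.cons_val]
    exact ⟨by linear_combination t * h15, by linear_combination -2 * t * h15,
      by linear_combination -4 * t * h15⟩

lemma ncard_unit_smul_orbit :
    {a : Fin 4 → ZMod 15 | ∃ k : (ZMod 15)ˣ, a = (k : ZMod 15) • ![1, 2, 4, 8]}.ncard = 8 := by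
  have hinj : Function.Injective fun k : (ZMod 15)ˣ => (k : ZMod 15) • ![(1 : ZMod 15), 2, 4, 8] :=
    fun k k' h => Units.ext (by simpa using congr_fun h 0)
  have hrange := Set.ncard_range_of_injective hinj
  simp only [Set.range, eq_comm] at hrange
  rw [← hrange, Nat.card_eq_fintype_card, ZMod.card_units_eq_totient]
  decide

lemma mem_GT15G_iff {a : Fin 4 → ZMod 15} :
    ((∀ i, a i ≠ 0) ∧ a 0 + a 1 + a 2 + a 3 = 0 ∧
        (∀ c ∈ coverGroupC, a 1 * c 0 + a 2 * c 1 + a 3 * c 2 = 0) ∧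
        ∃ k : (ZMod 15)ˣ, IsT15 ((k : ZMod 15) • a)) ↔
      ∃ k : (ZMod 15)ˣ, a = (k : ZMod 15) • ![1, 2, 4, 8] := by
  constructor
  · rintro ⟨-, hsum, hinv, hT⟩
    obtain ⟨t, rfl⟩ := sum_eq_zero_and_forall_coverGroupC_iff.1 ⟨hsum, hinv⟩
    obtain ⟨u, rfl⟩ := (exists_unit_smul_isT15_smul_iff t).1 hT
    exact ⟨u, rfl⟩
  · rintro ⟨k, rfl⟩
    obtain ⟨hsum, hinv⟩ := sum_eq_zero_and_forall_coverGroupC_iff.2 ⟨k, rfl⟩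
    exact ⟨smul_ne_zero_of_isUnit k.isUnit, hsum, hinv,
      (exists_unit_smul_isT15_smul_iff _).2 k.isUnit⟩

end Fermat15

/-- The characters `α ∈ 𝔄₁₅` (all `aᵢ ≠ 0`, `Σ aᵢ = 0`) that are `G`-invariant
and have some unit multiple `k·α` in `𝔗₁₅` (sum of representatives equal to
`15` or `45`) form exactly the `(ℤ/15ℤ)ˣ`-orbit of `(1,2,4,8)`, which has
exactly `8` elements. -/
theorem GT15G_orbit :
    ({a : Fin 4 → ZMod 15 |
        (∀ i, a i ≠ 0) ∧ a 0 + a 1 + a 2 + a 3 = 0 ∧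
        (∀ c ∈ coverGroupC, a 1 * c 0 + a 2 * c 1 + a 3 * c 2 = 0) ∧
        ∃ k : (ZMod 15)ˣ,
          ((k : ZMod 15) * a 0).val + ((k : ZMod 15) * a 1).val +
            ((k : ZMod 15) * a 2).val + ((k : ZMod 15) * a 3).val = 15 ∨
          ((k : ZMod 15) * a 0).val + ((k : ZMod 15) * a 1).val +
            ((k : ZMod 15) * a 2).val + ((k : ZMod 15) * a 3).val = 45}
      = {a | ∃ k : (ZMod 15)ˣ, a = (k : ZMod 15) • ![1, 2, 4, 8]}) ∧
    ({a : Fin 4 → ZMod 15 |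
        (∀ i, a i ≠ 0) ∧ a 0 + a 1 + a 2 + a 3 = 0 ∧
        (∀ c ∈ coverGroupC, a 1 * c 0 + a 2 * c 1 + a 3 * c 2 = 0) ∧
        ∃ k : (ZMod 15)ˣ,
          ((k : ZMod 15) * a 0).val + ((k : ZMod 15) * a 1).val +
            ((k : ZMod 15) * a 2).val + ((k : ZMod 15) * a 3).val = 15 ∨
          ((k : ZMod 15) * a 0).val + ((k : ZMod 15) * a 1).val +
            ((k : ZMod 15) * a 2).val + ((k : ZMod 15) * a 3).val = 45}).ncard = 8 := by
  have hS : {a : Fin 4 → ZMod 15 |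
        (∀ i, a i ≠ 0) ∧ a 0 + a 1 + a 2 + a 3 = 0 ∧
        (∀ c ∈ coverGroupC, a 1 * c 0 + a 2 * c 1 + a 3 * c 2 = 0) ∧
        ∃ k : (ZMod 15)ˣ, Fermat15.IsT15 ((k : ZMod 15) • a)}
      = {a | ∃ k : (ZMod 15)ˣ, a = (k : ZMod 15) • ![1, 2, 4, 8]} :=
    Set.ext fun _ => Fermat15.mem_GT15G_iff
  exact ⟨hS, hS ▸ Fermat15.ncard_unit_smul_orbit⟩
end
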